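/- For every p ∈ ℝ³ with p ≠ 0 or any p, the function x ↦ e^{2x}/√(e^{2x}+|p|²) is convex and monotonically increasing on ℝ. -/

import Mathlib

/-! With `u = e^{2x}` and `s = u + c`, the derivative of `u / √s` is `√s - c² / s^{3/2}`.
This is an increasing function of `s > 0`, and `s` increases with `x`, so the function is convex;
it is nonnegative because `s ≥ c ≥ 0`, so the function is increasing. -/

open Real Set

theorem monotoneOn_sqrt_sub_sq_div_mul_sqrt (c : ℝ) :
    MonotoneOn (fun s : ℝ => √s - c ^ 2 / (s * √s)) (Ioi 0) := by
  intro s (hs : 0 < s) t (ht : 0 < t) hst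
  have hsqrt : √s ≤ √t := sqrt_le_sqrt hst
  have hdenom : c ^ 2 / (t * √t) ≤ c ^ 2 / (s * √s) := by
    have := sqrt_pos.2 hs
    gcongr
  simp only
  linarith

theorem sqrt_sub_sq_div_mul_sqrt_nonneg {c s : ℝ} (h : |c| ≤ s) :
    0 ≤ √s - c ^ 2 / (s * √s) := by
  rcases (abs_nonneg c).trans h |>.eq_or_lt with rfl | hs
  · simp
  have hsqrt : 0 < √s := sqrt_pos.2 hs
  have hsq : c ^ 2 ≤ s ^ 2 := sq_le_sq' (abs_le.1 h).1 (abs_le.1 h).2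
  rw [sub_nonneg, div_le_iff₀ (by positivity), mul_left_comm, mul_self_sqrt hs.le, ← sq]
  exact hsq

theorem hasDerivAt_exp_two_mul_div_sqrt {c x : ℝ} (hx : 0 < exp (2 * x) + c) :
    HasDerivAt (fun x => exp (2 * x) / √(exp (2 * x) + c))
      (√(exp (2 * x) + c) - c ^ 2 / ((exp (2 * x) + c) * √(exp (2 * x) + c))) x := by
  have hexp : HasDerivAt (fun x => exp (2 * x)) (exp (2 * x) * 2) x := by
    simpa using ((hasDerivAt_id x).const_mul 2).exp
  refine (hexp.div ((hexp.add_const c).sqrt hx.ne') (sqrt_pos.2 hx).ne').congr_deriv ?_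
  set q := √(exp (2 * x) + c) with hq
  have hq0 : q ≠ 0 := (sqrt_pos.2 hx).ne'
  rw [show exp (2 * x) = q ^ 2 - c by rw [hq, sq_sqrt hx.le]; ring]
  field_simp
  ring

section

variable {c : ℝ}

theorem differentiable_exp_two_mul_div_sqrt (hc : 0 ≤ c) :
    Differentiable ℝ (fun x => exp (2 * x) / √(exp (2 * x) + c)) := fun x =>
  (hasDerivAt_exp_two_mul_div_sqrt (by positivity)).differentiableAt

theorem deriv_exp_two_mul_div_sqrt (hc : 0 ≤ c) :
    deriv (fun x => exp (2 * x) / √(exp (2 * x) + c)) =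
      fun x => √(exp (2 * x) + c) - c ^ 2 / ((exp (2 * x) + c) * √(exp (2 * x) + c)) :=
  funext fun _ => (hasDerivAt_exp_two_mul_div_sqrt (by positivity)).deriv

theorem convexOn_exp_two_mul_div_sqrt (hc : 0 ≤ c) :
    ConvexOn ℝ univ (fun x => exp (2 * x) / √(exp (2 * x) + c)) := by
  refine Monotone.convexOn_univ_of_deriv (differentiable_exp_two_mul_div_sqrt hc) ?_
  rw [deriv_exp_two_mul_div_sqrt hc]
  intro x y hxy
  have hexp : exp (2 * x) ≤ exp (2 * y) := exp_le_exp.2 (by linarith)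
  exact monotoneOn_sqrt_sub_sq_div_mul_sqrt c (by positivity : (0 : ℝ) < exp (2 * x) + c)
    (by positivity : (0 : ℝ) < exp (2 * y) + c) (by linarith)

theorem monotone_exp_two_mul_div_sqrt (hc : 0 ≤ c) :
    Monotone (fun x => exp (2 * x) / √(exp (2 * x) + c)) := by
  refine monotone_of_deriv_nonneg (differentiable_exp_two_mul_div_sqrt hc) fun x => ?_
  rw [deriv_exp_two_mul_div_sqrt hc]
  have hexp := exp_pos (2 * x)
  exact sqrt_sub_sq_div_mul_sqrt_nonneg (by rw [abs_of_nonneg hc]; linarith)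

end

theorem stmt_0 (p : EuclideanSpace ℝ (Fin 3)) :
    ConvexOn ℝ Set.univ (fun x : ℝ => exp (2 * x) / Real.sqrt (exp (2 * x) + ‖p‖ ^ 2)) ∧
    Monotone (fun x : ℝ => exp (2 * x) / Real.sqrt (exp (2 * x) + ‖p‖ ^ 2)) :=
  ⟨convexOn_exp_two_mul_div_sqrt (sq_nonneg _), monotone_exp_two_mul_div_sqrt (sq_nonneg _)⟩
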